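/- arXiv:1611.00653 — 5 statements merged into one kernel-verified Lean document; each statement's English description precedes it below -/
import Mathlib

section
/- Let n ≥ 1, p ∈ (1,∞) with conjugate exponent q = p/(p−1), and let A be an n×n complex matrix belonging to 𝒜_{λ,Λ} for some 0 < λ ≤ Λ. Then Δ_p(A) = Δ_q(A), and moreover Δ_p(A) = (2/p²)·min{ H_{F_p}^A[1;ξ] : ξ ∈ ℂⁿ, |ξ| = 1 } = (2/p²)·min{ H_{F_p}^A[ζ;ξ] : ζ ∈ ℂ, |ζ| = 1, ξ ∈ ℂⁿ, |ξ| = 1 } (in particular F_p is twice real-Fréchet differentiable at every ζ ≠ 0, so these quantities are defined). -/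
open scoped BigOperators ComplexConjugate Matrix

noncomputable section

namespace Paper

/-- The sesquilinear pairing `⟨z,w⟩ = ∑ j, z j * conj (w j)` on `ℂⁿ`. -/
def herm {n : ℕ} (z w : Fin n → ℂ) : ℂ := ∑ j, z j * conj (w j)

/-- Euclidean norm of a complex vector, `|z| = √⟨z,z⟩`. -/
def cnorm {n : ℕ} (z : Fin n → ℂ) : ℝ := Real.sqrt (herm z z).re

/-- Componentwise complex conjugate of a vector. -/
def vconj {n : ℕ} (z : Fin n → ℂ) : Fin n → ℂ := fun j => conj (z j)

/-- The ℝ-linear map `𝒥_p(α + iβ) = α/p + iβ/q`, where `1/p + 1/q = 1`,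
i.e. `1/q = 1 - 1/p`. -/
def Jmap {n : ℕ} (p : ℝ) (ξ : Fin n → ℂ) : Fin n → ℂ :=
  fun j => (((ξ j).re / p : ℝ) : ℂ) + Complex.I * (((ξ j).im * (1 - 1 / p) : ℝ) : ℂ)

/-- `Δ_p(A) = 2 · min { Re⟨Aξ, 𝒥_p ξ⟩ : ξ ∈ ℂⁿ, |ξ| = 1 }`. -/
def Deltap {n : ℕ} (p : ℝ) (A : Matrix (Fin n) (Fin n) ℂ) : ℝ :=
  sInf {t : ℝ | ∃ ξ : Fin n → ℂ, cnorm ξ = 1 ∧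
    t = 2 * (herm (A.mulVec ξ) (Jmap p ξ)).re}

/-- `Δ_r(A) = min { Re⟨Aξ,ξ⟩ − |1 − 2/r|·|⟨Aξ,ξ̄⟩| : |ξ| = 1 }`, the extension of
`Δ_p` to all `r > 0`. -/
def DeltaGen {n : ℕ} (r : ℝ) (A : Matrix (Fin n) (Fin n) ℂ) : ℝ :=
  sInf {t : ℝ | ∃ ξ : Fin n → ℂ, cnorm ξ = 1 ∧
    t = (herm (A.mulVec ξ) ξ).re - |1 - 2 / r| * ‖herm (A.mulVec ξ) (vconj ξ)‖}

/-- Membership in the class `𝒜_{λ,Λ}`: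
`Re⟨Aξ,ξ⟩ ≥ λ|ξ|²` and `|⟨Aξ,η⟩| ≤ Λ|ξ||η|`. -/
def memA {n : ℕ} (lam Lam : ℝ) (A : Matrix (Fin n) (Fin n) ℂ) : Prop :=
  (∀ ξ : Fin n → ℂ, lam * cnorm ξ ^ 2 ≤ (herm (A.mulVec ξ) ξ).re) ∧
  (∀ ξ η : Fin n → ℂ, ‖herm (A.mulVec ξ) η‖ ≤ Lam * cnorm ξ * cnorm η)

/-- `λ_A = min { Re⟨Aξ,ξ⟩ : |ξ| = 1 }`. -/
def lamA {n : ℕ} (A : Matrix (Fin n) (Fin n) ℂ) : ℝ :=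
  sInf {t : ℝ | ∃ ξ : Fin n → ℂ, cnorm ξ = 1 ∧ t = (herm (A.mulVec ξ) ξ).re}

/-- `Λ_A = max { |⟨Aξ,η⟩| : |ξ| = |η| = 1 }`. -/
def LamA {n : ℕ} (A : Matrix (Fin n) (Fin n) ℂ) : ℝ :=
  sSup {t : ℝ | ∃ ξ η : Fin n → ℂ, cnorm ξ = 1 ∧ cnorm η = 1 ∧
    t = ‖herm (A.mulVec ξ) η‖}

/-- `μ(A) = inf { Re⟨Aξ,ξ⟩/|⟨Aξ,ξ̄⟩| : ⟨Aξ,ξ̄⟩ ≠ 0 }`. -/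
def muA {n : ℕ} (A : Matrix (Fin n) (Fin n) ℂ) : ℝ :=
  sInf {t : ℝ | ∃ ξ : Fin n → ℂ, herm (A.mulVec ξ) (vconj ξ) ≠ 0 ∧
    t = (herm (A.mulVec ξ) ξ).re / ‖herm (A.mulVec ξ) (vconj ξ)‖}

/-- Second real Fréchet derivative of `F : ℂ → ℝ` at `ζ`, as a bilinear expression. -/
def D2 (F : ℂ → ℝ) (ζ : ℂ) (ξ η : ℂ) : ℝ := fderiv ℝ (fderiv ℝ F) ζ ξ η

/-- `F : ℂ → ℝ` is twice real-Fréchet differentiable at `ζ`. -/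
def TwiceDiffAt (F : ℂ → ℝ) (ζ : ℂ) : Prop :=
  DifferentiableAt ℝ F ζ ∧ DifferentiableAt ℝ (fderiv ℝ F) ζ

/-- `H_F^A[ζ;ξ] = ∑ j, D²F(ζ)[ξ_j, (Aξ)_j]`. -/
def HFA {n : ℕ} (F : ℂ → ℝ) (A : Matrix (Fin n) (Fin n) ℂ) (ζ : ℂ) (ξ : Fin n → ℂ) : ℝ :=
  ∑ j, D2 F ζ (ξ j) (A.mulVec ξ j)

/-- The power function `F_r(ζ) = |ζ|^r`. -/
def Fpow (r : ℝ) (ζ : ℂ) : ℝ := ‖ζ‖ ^ r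

/-- Real dot product. -/
def rdot {n : ℕ} (u v : Fin n → ℝ) : ℝ := ∑ j, u j * v j

/-- Euclidean norm of a real vector. -/
def enorm {n : ℕ} (u : Fin n → ℝ) : ℝ := Real.sqrt (∑ j, u j ^ 2)

/-- Operator norm `‖M‖ = max { |Mu| : |u| = 1 }` of a real matrix. -/
def opnormR {n : ℕ} (M : Matrix (Fin n) (Fin n) ℝ) : ℝ :=
  sSup {t : ℝ | ∃ u : Fin n → ℝ, enorm u = 1 ∧ t = enorm (M.mulVec u)}

/-- Symmetric part `M_s = (M + Mᵀ)/2`. -/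
def symPart {n : ℕ} {R : Type*} [Field R] (M : Matrix (Fin n) (Fin n) R) :
    Matrix (Fin n) (Fin n) R := (2 : R)⁻¹ • (M + Mᵀ)

/-- Antisymmetric part `M_a = (M − Mᵀ)/2`. -/
def antiPart {n : ℕ} {R : Type*} [Field R] (M : Matrix (Fin n) (Fin n) R) :
    Matrix (Fin n) (Fin n) R := (2 : R)⁻¹ • (M - Mᵀ)

/-- `𝒱_p(V) = ((p−2)/(2√(p−1)))·V_s + (p/(2√(p−1)))·V_a`. -/
def Vmap {n : ℕ} (p : ℝ) (V : Matrix (Fin n) (Fin n) ℝ) : Matrix (Fin n) (Fin n) ℝ :=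
  ((p - 2) / (2 * Real.sqrt (p - 1))) • symPart V + (p / (2 * Real.sqrt (p - 1))) • antiPart V

/-- A real matrix is (symmetric) positive definite. -/
def RPosDef {n : ℕ} (M : Matrix (Fin n) (Fin n) ℝ) : Prop :=
  Mᵀ = M ∧ ∀ u : Fin n → ℝ, u ≠ 0 → 0 < rdot (M.mulVec u) u

/-- The complex matrix `U + iV` built from two real matrices. -/
def cplx {n : ℕ} (U V : Matrix (Fin n) (Fin n) ℝ) : Matrix (Fin n) (Fin n) ℂ :=
  Matrix.of fun i j => ((U i j : ℂ) + Complex.I * (V i j : ℂ))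

/-- `Φ : ℂ×ℂ → ℝ` is twice real-Fréchet differentiable at `v`. -/
def TwiceDiffAt2 (Φ : ℂ × ℂ → ℝ) (v : ℂ × ℂ) : Prop :=
  DifferentiableAt ℝ Φ v ∧ DifferentiableAt ℝ (fderiv ℝ Φ) v

/-- `H_Φ^{(A,B)}[v;ω] = ∑ j, D²Φ(v)[(ω₁ⱼ, ω₂ⱼ), ((Aω₁)ⱼ, (Bω₂)ⱼ)]`. -/
def HAB {n : ℕ} (Φ : ℂ × ℂ → ℝ) (A B : Matrix (Fin n) (Fin n) ℂ) (v : ℂ × ℂ)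
    (ω₁ ω₂ : Fin n → ℂ) : ℝ :=
  ∑ j, fderiv ℝ (fderiv ℝ Φ) v (ω₁ j, ω₂ j) (A.mulVec ω₁ j, B.mulVec ω₂ j)

/-- The Nazarov–Treil Bellman function `Q_{p,δ}` (with `q = p/(p−1)` passed explicitly). -/
def QNT (p q δ : ℝ) (ζ η : ℂ) : ℝ :=
  ‖ζ‖ ^ p + ‖η‖ ^ q +
    δ * (if ‖ζ‖ ^ p ≤ ‖η‖ ^ q
      then ‖ζ‖ ^ (2 : ℝ) * ‖η‖ ^ (2 - q)
      else (2 / p) * ‖ζ‖ ^ p + (2 / q - 1) * ‖η‖ ^ q)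

/-- `Δ_p` of a matrix-valued function on a subset `Ω ⊆ ℝᵐ`:
`2 · essinf_{x∈Ω} min_{|ξ|=1} Re⟨A(x)ξ, 𝒥_p ξ⟩`. -/
def DeltapAE {m n : ℕ} (p : ℝ) (A : (Fin m → ℝ) → Matrix (Fin n) (Fin n) ℂ)
    (Ω : Set (Fin m → ℝ)) : ℝ :=
  2 * essInf (fun x => sInf {t : ℝ | ∃ ξ : Fin n → ℂ, cnorm ξ = 1 ∧
      t = (herm ((A x).mulVec ξ) (Jmap p ξ)).re}) (MeasureTheory.volume.restrict Ω)

end Paper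

/-!
When `1/p + 1/q = 1` one has `𝒥_p(iξ) = i 𝒥_q(ξ)`, so the substitution `ξ ↦ iξ`, which
preserves the unit sphere, turns the form defining `Δ_p` into the one defining `Δ_q`.
Away from the origin `D²F_p(ζ)[u,v] = p|ζ|^(p-2)⟪u,v⟫ + p(p-2)|ζ|^(p-4)⟪ζ,u⟫⟪ζ,v⟫` (real inner
product on `ℂ`); at `ζ = 1` this is `p² Re(v · conj (𝒥_q u))`, and for `|ζ| = 1` the rotation
`ξ ↦ ζξ` carries `H[ζ; ·]` to `H[1; ·]`.
-/

open scoped RealInnerProductSpace Topology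

section NormRpow

variable {E : Type*} [NormedAddCommGroup E] [InnerProductSpace ℝ E]

theorem hasStrictFDerivAt_norm_rpow_of_ne_zero {x : E} (hx : x ≠ 0) (p : ℝ) :
    HasStrictFDerivAt (fun y : E ↦ ‖y‖ ^ p) ((p * ‖x‖ ^ (p - 2)) • innerSL ℝ x) x := by
  convert (hasStrictFDerivAt_norm_sq x).rpow_const (p := p / 2) (by simp [hx]) using 1
  · ext y
    rw [← Real.rpow_natCast_mul (norm_nonneg _)]
    ring_nf
  · rw [← Real.rpow_natCast_mul (norm_nonneg _), ← Nat.cast_smul_eq_nsmul ℝ, smul_smul]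
    ring_nf

theorem fderiv_norm_rpow_eventuallyEq {x : E} (hx : x ≠ 0) (p : ℝ) :
    fderiv ℝ (fun y : E ↦ ‖y‖ ^ p) =ᶠ[𝓝 x] fun y ↦ (p * ‖y‖ ^ (p - 2)) • innerSL ℝ y := by
  filter_upwards [isOpen_ne.mem_nhds hx] with y hy
  exact (hasStrictFDerivAt_norm_rpow_of_ne_zero hy p).hasFDerivAt.fderiv

theorem hasFDerivAt_const_mul_norm_rpow_sub_two {x : E} (hx : x ≠ 0) (p : ℝ) :
    HasFDerivAt (fun y : E ↦ p * ‖y‖ ^ (p - 2))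
      ((p * (p - 2) * ‖x‖ ^ (p - 4)) • innerSL ℝ x) x :=
  ((hasStrictFDerivAt_norm_rpow_of_ne_zero hx (p - 2)).hasFDerivAt.const_mul p).congr_fderiv
    (by rw [smul_smul]; ring_nf)

theorem differentiableAt_fderiv_norm_rpow {x : E} (hx : x ≠ 0) (p : ℝ) :
    DifferentiableAt ℝ (fderiv ℝ fun y : E ↦ ‖y‖ ^ p) x :=
  (fderiv_norm_rpow_eventuallyEq hx p).differentiableAt_iff.mpr
    ((hasFDerivAt_const_mul_norm_rpow_sub_two hx p).smul
      (innerSL ℝ (E := E)).hasFDerivAt).differentiableAt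

theorem fderiv_fderiv_norm_rpow_apply {x : E} (hx : x ≠ 0) (p : ℝ) (u v : E) :
    fderiv ℝ (fderiv ℝ fun y : E ↦ ‖y‖ ^ p) x u v =
      p * ‖x‖ ^ (p - 2) * ⟪u, v⟫ + p * (p - 2) * ‖x‖ ^ (p - 4) * ⟪x, u⟫ * ⟪x, v⟫ := by
  rw [(fderiv_norm_rpow_eventuallyEq hx p).fderiv_eq,
    HasFDerivAt.fderiv (f := fun y : E ↦ (p * ‖y‖ ^ (p - 2)) • innerSL ℝ y)
      ((hasFDerivAt_const_mul_norm_rpow_sub_two hx p).smul (innerSL ℝ (E := E)).hasFDerivAt)]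
  simp only [add_apply, smul_apply, ContinuousLinearMap.smulRight_apply, smul_eq_mul]
  rfl

end NormRpow

theorem sInf_setOf_mul_left {α : Type*} (P : α → Prop) (f : α → ℝ) {c : ℝ} (hc : 0 ≤ c) :
    sInf {t : ℝ | ∃ a, P a ∧ t = c * f a} = c * sInf {t : ℝ | ∃ a, P a ∧ t = f a} := by
  rw [← smul_eq_mul, ← Real.sInf_smul_of_nonneg hc]
  congr 1
  ext t
  simp only [Set.mem_smul_set, Set.mem_ofPred_eq, smul_eq_mul]
  constructor
  · rintro ⟨a, ha, rfl⟩
    exact ⟨f a, ⟨a, ha, rfl⟩, rfl⟩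
  · rintro ⟨_, ⟨a, ha, rfl⟩, rfl⟩
    exact ⟨a, ha, rfl⟩

namespace Paper

open Complex

variable {n : ℕ}

theorem herm_smul_smul (c : ℂ) (z w : Fin n → ℂ) :
    herm (c • z) (c • w) = normSq c * herm z w := by
  simp only [herm, Finset.mul_sum, Pi.smul_apply, smul_eq_mul, map_mul, ← mul_conj]
  exact Finset.sum_congr rfl fun _ _ ↦ by ring

theorem cnorm_smul (c : ℂ) (ξ : Fin n → ℂ) : cnorm (c • ξ) = ‖c‖ * cnorm ξ := by
  rw [cnorm, cnorm, herm_smul_smul, re_ofReal_mul, Real.sqrt_mul (normSq_nonneg c),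
    normSq_eq_norm_sq, Real.sqrt_sq (norm_nonneg c)]

theorem setOf_unit_eq_of_smul {f g : (Fin n → ℂ) → ℝ} {c : ℂ} (hc : ‖c‖ = 1)
    (h : ∀ ξ, f (c • ξ) = g ξ) :
    {t : ℝ | ∃ ξ, cnorm ξ = 1 ∧ t = f ξ} = {t : ℝ | ∃ ξ, cnorm ξ = 1 ∧ t = g ξ} := by
  have hc0 : c ≠ 0 := norm_ne_zero_iff.mp (hc ▸ one_ne_zero)
  ext t
  constructor
  · rintro ⟨ξ, hξ, rfl⟩
    refine ⟨c⁻¹ • ξ, by rw [cnorm_smul, norm_inv, hc, inv_one, one_mul, hξ], ?_⟩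
    rw [← h, smul_inv_smul₀ hc0]
  · rintro ⟨ξ, hξ, rfl⟩
    exact ⟨c • ξ, by rw [cnorm_smul, hc, one_mul, hξ], (h ξ).symm⟩

theorem Jmap_I_smul {p q : ℝ} (hpq : p⁻¹ + q⁻¹ = 1) (ξ : Fin n → ℂ) :
    Jmap p (I • ξ) = I • Jmap q ξ := by
  have hp : 1 - p⁻¹ = q⁻¹ := by linarith
  have hq : 1 - q⁻¹ = p⁻¹ := by linarith
  funext j
  apply Complex.ext <;> simp [Jmap, hp, hq, div_eq_mul_inv]

theorem herm_mulVec_I_smul_Jmap {p q : ℝ} (hpq : p⁻¹ + q⁻¹ = 1)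
    (A : Matrix (Fin n) (Fin n) ℂ) (ξ : Fin n → ℂ) :
    herm (A *ᵥ (I • ξ)) (Jmap p (I • ξ)) = herm (A *ᵥ ξ) (Jmap q ξ) := by
  rw [Matrix.mulVec_smul, Jmap_I_smul hpq, herm_smul_smul, normSq_I, ofReal_one, one_mul]

theorem Deltap_eq_Deltap_of_inv_add_inv {p q : ℝ} (hpq : p⁻¹ + q⁻¹ = 1)
    (A : Matrix (Fin n) (Fin n) ℂ) :
    Deltap p A = Deltap q A :=
  congrArg sInf <| setOf_unit_eq_of_smul norm_I fun ξ ↦ by rw [herm_mulVec_I_smul_Jmap hpq]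

theorem twiceDiffAt_Fpow {ζ : ℂ} (hζ : ζ ≠ 0) (p : ℝ) : TwiceDiffAt (Fpow p) ζ :=
  ⟨(hasStrictFDerivAt_norm_rpow_of_ne_zero hζ p).differentiableAt,
    differentiableAt_fderiv_norm_rpow hζ p⟩

theorem D2_Fpow_of_norm_eq_one {ζ : ℂ} (hζ : ‖ζ‖ = 1) (p : ℝ) (u v : ℂ) :
    D2 (Fpow p) ζ u v = p * ⟪u, v⟫ + p * (p - 2) * ⟪ζ, u⟫ * ⟪ζ, v⟫ := by
  have hζ0 : ζ ≠ 0 := norm_ne_zero_iff.mp (hζ ▸ one_ne_zero)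
  rw [D2, show Fpow p = fun y : ℂ ↦ ‖y‖ ^ p from rfl, fderiv_fderiv_norm_rpow_apply hζ0, hζ,
    Real.one_rpow, Real.one_rpow, mul_one, mul_one]

theorem D2_Fpow_one (p : ℝ) (u v : ℂ) :
    D2 (Fpow p) 1 u v = p * (p - 1) * u.re * v.re + p * u.im * v.im := by
  rw [D2_Fpow_of_norm_eq_one norm_one]
  simp only [Complex.inner, mul_re, conj_re, conj_im, map_one, one_re, one_im]
  ring

theorem inner_mul_mul_of_norm_eq_one {ζ : ℂ} (hζ : ‖ζ‖ = 1) (u v : ℂ) :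
    ⟪ζ * u, ζ * v⟫ = ⟪u, v⟫ := by
  have hζζ : ζ * conj ζ = 1 := by rw [mul_conj, normSq_eq_norm_sq, hζ]; norm_num
  rw [Complex.inner, Complex.inner, map_mul,
    show ζ * v * (conj ζ * conj u) = ζ * conj ζ * (v * conj u) by ring, hζζ, one_mul]

theorem D2_Fpow_mul_of_norm_eq_one {ζ : ℂ} (hζ : ‖ζ‖ = 1) (p : ℝ) (u v : ℂ) :
    D2 (Fpow p) ζ (ζ * u) (ζ * v) = D2 (Fpow p) 1 u v := by
  rw [D2_Fpow_of_norm_eq_one hζ, D2_Fpow_of_norm_eq_one norm_one,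
    inner_mul_mul_of_norm_eq_one hζ, ← inner_mul_mul_of_norm_eq_one hζ 1 u,
    ← inner_mul_mul_of_norm_eq_one hζ 1 v, mul_one]

theorem HFA_Fpow_smul_of_norm_eq_one {ζ : ℂ} (hζ : ‖ζ‖ = 1) (p : ℝ)
    (A : Matrix (Fin n) (Fin n) ℂ) (ξ : Fin n → ℂ) :
    HFA (Fpow p) A ζ (ζ • ξ) = HFA (Fpow p) A 1 ξ := by
  simp only [HFA, Matrix.mulVec_smul, Pi.smul_apply, smul_eq_mul,
    D2_Fpow_mul_of_norm_eq_one hζ]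

theorem re_herm_Jmap_eq_HFA_Fpow {p q : ℝ} (hp : p ≠ 0) (hpq : p⁻¹ + q⁻¹ = 1)
    (A : Matrix (Fin n) (Fin n) ℂ) (ξ : Fin n → ℂ) :
    2 * (herm (A *ᵥ ξ) (Jmap q ξ)).re = 2 / p ^ 2 * HFA (Fpow p) A 1 ξ := by
  have hq : q⁻¹ = 1 - p⁻¹ := by linarith
  simp only [herm, HFA, D2_Fpow_one, re_sum, Finset.mul_sum, mul_re, conj_re, conj_im, Jmap,
    add_re, add_im, mul_im, ofReal_re, ofReal_im, I_re, I_im, div_eq_mul_inv, one_mul, hq]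
  refine Finset.sum_congr rfl fun _ _ ↦ ?_
  field_simp
  ring

theorem setOf_HFA_Fpow_eq (p : ℝ) (A : Matrix (Fin n) (Fin n) ℂ) :
    {t : ℝ | ∃ (ζ : ℂ) (ξ : Fin n → ℂ), ‖ζ‖ = 1 ∧ cnorm ξ = 1 ∧ t = HFA (Fpow p) A ζ ξ} =
      {t : ℝ | ∃ ξ : Fin n → ℂ, cnorm ξ = 1 ∧ t = HFA (Fpow p) A 1 ξ} := by
  ext t
  constructor
  · rintro ⟨ζ, ξ, hζ, hξ, rfl⟩
    rw [← setOf_unit_eq_of_smul hζ (HFA_Fpow_smul_of_norm_eq_one hζ p A)]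
    exact ⟨ξ, hξ, rfl⟩
  · rintro ⟨ξ, hξ, rfl⟩
    exact ⟨1, ξ, norm_one, hξ, rfl⟩

end Paper

theorem statement0_general (n : ℕ) (p q : ℝ) (hp : 1 < p)
    (hq : q = p / (p - 1))
    (A : Matrix (Fin n) (Fin n) ℂ) :
    (∀ ζ : ℂ, ζ ≠ 0 → Paper.TwiceDiffAt (Paper.Fpow p) ζ) ∧
    Paper.Deltap p A = Paper.Deltap q A ∧
    Paper.Deltap p A = (2 / p ^ 2) *
      sInf {t : ℝ | ∃ ξ : Fin n → ℂ, Paper.cnorm ξ = 1 ∧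
        t = Paper.HFA (Paper.Fpow p) A 1 ξ} ∧
    Paper.Deltap p A = (2 / p ^ 2) *
      sInf {t : ℝ | ∃ (ζ : ℂ) (ξ : Fin n → ℂ), ‖ζ‖ = 1 ∧ Paper.cnorm ξ = 1 ∧
        t = Paper.HFA (Paper.Fpow p) A ζ ξ} := by
  have hpq : p.HolderConjugate q := hq ▸ .conjExponent hp
  have hΔ := Paper.Deltap_eq_Deltap_of_inv_add_inv hpq.inv_add_inv_eq_one A
  have hH : Paper.Deltap p A = (2 / p ^ 2) *
      sInf {t : ℝ | ∃ ξ : Fin n → ℂ, Paper.cnorm ξ = 1 ∧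
        t = Paper.HFA (Paper.Fpow p) A 1 ξ} := by
    rw [hΔ, Paper.Deltap, ← sInf_setOf_mul_left _ _ (by positivity)]
    simp_rw [Paper.re_herm_Jmap_eq_HFA_Fpow hpq.ne_zero hpq.inv_add_inv_eq_one]
  exact ⟨fun ζ hζ ↦ Paper.twiceDiffAt_Fpow hζ p, hΔ, hH, by rw [Paper.setOf_HFA_Fpow_eq, hH]⟩

/-- `Δ_p(A) = Δ_q(A)` and both equal
`(2/p²)·min H_{F_p}^A[1;ξ] = (2/p²)·min H_{F_p}^A[ζ;ξ]`. -/
theorem statement0 (n : ℕ) (hn : 1 ≤ n) (p q lam Lam : ℝ) (hp : 1 < p)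
    (hq : q = p / (p - 1)) (hlam : 0 < lam) (hLam : lam ≤ Lam)
    (A : Matrix (Fin n) (Fin n) ℂ) (hA : Paper.memA lam Lam A) :
    (∀ ζ : ℂ, ζ ≠ 0 → Paper.TwiceDiffAt (Paper.Fpow p) ζ) ∧
    Paper.Deltap p A = Paper.Deltap q A ∧
    Paper.Deltap p A = (2 / p ^ 2) *
      sInf {t : ℝ | ∃ ξ : Fin n → ℂ, Paper.cnorm ξ = 1 ∧
        t = Paper.HFA (Paper.Fpow p) A 1 ξ} ∧
    Paper.Deltap p A = (2 / p ^ 2) *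
      sInf {t : ℝ | ∃ (ζ : ℂ) (ξ : Fin n → ℂ), ‖ζ‖ = 1 ∧ Paper.cnorm ξ = 1 ∧
        t = Paper.HFA (Paper.Fpow p) A ζ ξ} :=
  statement0_general n p q hp hq A
end
end

section
/- Let n ≥ 1, p ∈ (1,∞), and let A be an n×n complex matrix belonging to 𝒜_{λ,Λ} for some 0 < λ ≤ Λ. Then Δ_p(A) = min{ Re⟨Aξ,ξ⟩ − |1 − 2/p|·|⟨Aξ,ξ̄⟩| : ξ ∈ ℂⁿ, |ξ| = 1 }. -/
open scoped BigOperators ComplexConjugate Matrix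

noncomputable section

/-!
Writing `⟨Aξ, 𝒥_p ξ⟩` through `ξ` and `ξ̄` gives
`2 Re⟨Aξ, 𝒥_p ξ⟩ = Re⟨Aξ, ξ⟩ + (2/p - 1) Re⟨Aξ, ξ̄⟩ ≥ Re⟨Aξ, ξ⟩ - |1 - 2/p| |⟨Aξ, ξ̄⟩|`.
Replacing `ξ` by `cξ` with `|c| = 1` keeps `|ξ|` and `⟨Aξ, ξ⟩` but multiplies `⟨Aξ, ξ̄⟩` by `c²`,
and a suitable `c` turns the inequality into an equality, so both minima agree.
-/

namespace Paper

variable {n : ℕ}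

lemma herm_smul_smul_s1 (c d : ℂ) (x y : Fin n → ℂ) :
    herm (c • x) (d • y) = c * conj d * herm x y := by
  simp only [herm, Pi.smul_apply, smul_eq_mul, map_mul, Finset.mul_sum]
  exact Finset.sum_congr rfl fun j _ => by ring

lemma vconj_smul (c : ℂ) (x : Fin n → ℂ) : vconj (c • x) = conj c • vconj x := by
  funext j
  simp [vconj]

lemma two_mul_re_herm_Jmap (p : ℝ) (x ξ : Fin n → ℂ) :
    2 * (herm x (Jmap p ξ)).re = (herm x ξ).re + (2 / p - 1) * (herm x (vconj ξ)).re := by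
  simp only [herm, Jmap, vconj, Complex.re_sum, Finset.mul_sum, ← Finset.sum_add_distrib]
  refine Finset.sum_congr rfl fun j _ => ?_
  simp only [map_add, map_mul, Complex.conj_ofReal, Complex.conj_I, Complex.conj_conj,
    Complex.mul_re, Complex.add_re, Complex.add_im, Complex.mul_im, Complex.conj_re,
    Complex.conj_im, Complex.ofReal_re, Complex.ofReal_im, Complex.I_re, Complex.I_im,
    Complex.neg_re, Complex.neg_im]
  ring

lemma sub_abs_mul_norm_le_two_mul_re_herm_Jmap (p : ℝ) (x ξ : Fin n → ℂ) :
    (herm x ξ).re - |1 - 2 / p| * ‖herm x (vconj ξ)‖ ≤ 2 * (herm x (Jmap p ξ)).re := by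
  have h : |(2 / p - 1) * (herm x (vconj ξ)).re| ≤ |1 - 2 / p| * ‖herm x (vconj ξ)‖ := by
    rw [abs_mul, abs_sub_comm]
    exact mul_le_mul_of_nonneg_left (Complex.abs_re_le_norm _) (abs_nonneg _)
  rw [two_mul_re_herm_Jmap]
  linarith [neg_abs_le ((2 / p - 1) * (herm x (vconj ξ)).re)]

lemma mul_conj_of_norm_eq_one {c : ℂ} (hc : ‖c‖ = 1) : c * conj c = 1 := by
  rw [Complex.mul_conj, Complex.normSq_eq_norm_sq, hc]
  norm_num

lemma cnorm_smul_of_norm_eq_one {c : ℂ} (hc : ‖c‖ = 1) (x : Fin n → ℂ) :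
    cnorm (c • x) = cnorm x := by
  rw [cnorm, herm_smul_smul_s1, mul_conj_of_norm_eq_one hc, one_mul, cnorm]

lemma herm_mulVec_smul_smul {c : ℂ} (hc : ‖c‖ = 1) (A : Matrix (Fin n) (Fin n) ℂ)
    (ξ : Fin n → ℂ) : herm (A *ᵥ (c • ξ)) (c • ξ) = herm (A *ᵥ ξ) ξ := by
  rw [Matrix.mulVec_smul, herm_smul_smul_s1, mul_conj_of_norm_eq_one hc, one_mul]

lemma herm_mulVec_smul_vconj_smul (c : ℂ) (A : Matrix (Fin n) (Fin n) ℂ) (ξ : Fin n → ℂ) :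
    herm (A *ᵥ (c • ξ)) (vconj (c • ξ)) = c ^ 2 * herm (A *ᵥ ξ) (vconj ξ) := by
  rw [Matrix.mulVec_smul, vconj_smul, herm_smul_smul_s1, Complex.conj_conj, sq]

lemma exists_norm_eq_one_sq_mul_eq (h : ℂ) {s : ℝ} (hs : |s| = ‖h‖) :
    ∃ c : ℂ, ‖c‖ = 1 ∧ c ^ 2 * h = s := by
  rcases eq_or_ne h 0 with rfl | h0
  · exact ⟨1, by simp, by simp_all⟩
  obtain ⟨c, hc⟩ := Complex.isSquare (s / h)
  have hnorm : ‖c‖ ^ 2 = 1 := by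
    rw [sq, ← norm_mul, ← hc, norm_div, Complex.norm_real, Real.norm_eq_abs, hs,
      div_self (norm_ne_zero_iff.mpr h0)]
  refine ⟨c, (pow_eq_one_iff_of_nonneg (norm_nonneg c) two_ne_zero).mp hnorm, ?_⟩
  rw [sq, ← hc, div_mul_cancel₀ _ h0]

lemma exists_norm_eq_one_mul_re_sq_mul_eq (r : ℝ) (h : ℂ) :
    ∃ c : ℂ, ‖c‖ = 1 ∧ r * (c ^ 2 * h).re = -(|r| * ‖h‖) := by
  rcases le_or_gt 0 r with hr | hr
  · obtain ⟨c, hc, hch⟩ := exists_norm_eq_one_sq_mul_eq h (s := -‖h‖) (by simp)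
    exact ⟨c, hc, by rw [hch, Complex.ofReal_re, abs_of_nonneg hr]; ring⟩
  · obtain ⟨c, hc, hch⟩ := exists_norm_eq_one_sq_mul_eq h (s := ‖h‖) (by simp)
    exact ⟨c, hc, by rw [hch, Complex.ofReal_re, abs_of_neg hr]; ring⟩

lemma exists_norm_eq_one_two_mul_re_herm_Jmap_smul_eq (p : ℝ) (A : Matrix (Fin n) (Fin n) ℂ)
    (ξ : Fin n → ℂ) : ∃ c : ℂ, ‖c‖ = 1 ∧ 2 * (herm (A *ᵥ (c • ξ)) (Jmap p (c • ξ))).re =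
      (herm (A *ᵥ ξ) ξ).re - |1 - 2 / p| * ‖herm (A *ᵥ ξ) (vconj ξ)‖ := by
  obtain ⟨c, hc, hrot⟩ := exists_norm_eq_one_mul_re_sq_mul_eq (2 / p - 1) (herm (A *ᵥ ξ) (vconj ξ))
  refine ⟨c, hc, ?_⟩
  rw [two_mul_re_herm_Jmap, herm_mulVec_smul_smul hc, herm_mulVec_smul_vconj_smul, hrot,
    abs_sub_comm]
  ring

end Paper

theorem statement1_general (n : ℕ) (p : ℝ) (A : Matrix (Fin n) (Fin n) ℂ) :
    Paper.Deltap p A = sInf {t : ℝ | ∃ ξ : Fin n → ℂ, Paper.cnorm ξ = 1 ∧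
      t = (Paper.herm (A.mulVec ξ) ξ).re
        - |1 - 2 / p| * ‖Paper.herm (A.mulVec ξ) (Paper.vconj ξ)‖} := by
  refine csInf_eq_csInf_of_forall_exists_le ?_ ?_
  · rintro _ ⟨ξ, hξ, rfl⟩
    exact ⟨_, ⟨ξ, hξ, rfl⟩, Paper.sub_abs_mul_norm_le_two_mul_re_herm_Jmap p _ ξ⟩
  · rintro _ ⟨ξ, hξ, rfl⟩
    obtain ⟨c, hc, hmin⟩ := Paper.exists_norm_eq_one_two_mul_re_herm_Jmap_smul_eq p A ξ
    exact ⟨_, ⟨c • ξ, (Paper.cnorm_smul_of_norm_eq_one hc ξ).trans hξ, rfl⟩, hmin.le⟩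

/-- `Δ_p(A) = min { Re⟨Aξ,ξ⟩ − |1 − 2/p|·|⟨Aξ,ξ̄⟩| : |ξ| = 1 }`. -/
theorem statement1 (n : ℕ) (hn : 1 ≤ n) (p lam Lam : ℝ) (hp : 1 < p)
    (hlam : 0 < lam) (hLam : lam ≤ Lam)
    (A : Matrix (Fin n) (Fin n) ℂ) (hA : Paper.memA lam Lam A) :
    Paper.Deltap p A = sInf {t : ℝ | ∃ ξ : Fin n → ℂ, Paper.cnorm ξ = 1 ∧
      t = (Paper.herm (A.mulVec ξ) ξ).re
        - |1 - 2 / p| * ‖Paper.herm (A.mulVec ξ) (Paper.vconj ξ)‖} :=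
  statement1_general n p A
end
end

section
/- Let r > 0 and ζ ∈ ℂ∖{0}. Then F_r is twice real-Fréchet differentiable at ζ and, for all ξ, η ∈ ℂ, D²F_r(ζ)[ξ,η] = (r²/2)·|ζ|^{r−2}·( Re(ξ·conj(η)) + (1 − 2/r)·Re(e^{−2i·arg ζ}·ξ·η) ). -/
open scoped BigOperators ComplexConjugate Matrix

noncomputable section

/-!
Away from the origin `‖x‖ ^ r = (‖x‖ ^ 2) ^ (r / 2)` is a composition of smooth maps, with gradient
`r ‖x‖ ^ (r - 2) ⟪x, ·⟫`; differentiating this product once more gives, in any real inner product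
space, `D²(‖·‖ ^ r)(x)[ξ, η] = r ‖x‖ ^ (r - 2) ⟪ξ, η⟫ + r (r - 2) ‖x‖ ^ (r - 4) ⟪x, ξ⟫ ⟪x, η⟫`.
In `ℂ`, writing `ζ = ‖ζ‖ e^{iθ}`, the product of the two projections onto `ζ` splits as
`2 ⟪ζ, ξ⟫ ⟪ζ, η⟫ = ‖ζ‖² (Re (ξ η̄) + Re (e^{-2iθ} ξ η))`, which turns this into the stated formula.
-/

section NormRpow

variable {E : Type*} [NormedAddCommGroup E] [InnerProductSpace ℝ E] {x : E}

theorem hasFDerivAt_norm_rpow_of_ne_zero (r : ℝ) (hx : x ≠ 0) :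
    HasFDerivAt (fun x : E ↦ ‖x‖ ^ r) ((r * ‖x‖ ^ (r - 2)) • innerSL ℝ x) x := by
  convert (hasStrictFDerivAt_norm_sq x).hasFDerivAt.rpow_const (p := r / 2) (by simp [hx])
    using 1
  · ext y
    rw [← Real.rpow_natCast_mul (norm_nonneg _)]
    ring_nf
  · rw [← Real.rpow_natCast_mul (norm_nonneg _), ← Nat.cast_smul_eq_nsmul ℝ, smul_smul]
    ring_nf

/- An existential, because `innerSL ℝ` is typed as `starRingEnd ℝ`-semilinear and so cannot be
added to the linear `smulRight` term of the explicit second derivative. -/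
theorem exists_hasFDerivAt_fderiv_norm_rpow (r : ℝ) (hx : x ≠ 0) :
    ∃ B : E →L[ℝ] E →L[ℝ] ℝ, HasFDerivAt (fderiv ℝ fun x : E ↦ ‖x‖ ^ r) B x ∧
      ∀ ξ η, B ξ η = r * ‖x‖ ^ (r - 2) * inner ℝ ξ η +
        r * (r - 2) * ‖x‖ ^ (r - 4) * inner ℝ x ξ * inner ℝ x η := by
  have hgrad : fderiv ℝ (fun x : E ↦ ‖x‖ ^ r) =ᶠ[nhds x]
      fun y ↦ (r * ‖y‖ ^ (r - 2)) • innerSL ℝ y :=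
    (eventually_ne_nhds hx).mono fun _ hy ↦ (hasFDerivAt_norm_rpow_of_ne_zero r hy).fderiv
  have hcoeff := (hasFDerivAt_norm_rpow_of_ne_zero (r - 2) hx).const_mul r
  have hinner : HasFDerivAt (fun y : E ↦ innerSL ℝ y) (innerSL ℝ : E →L[ℝ] E →L[ℝ] ℝ) x :=
    ContinuousLinearMap.hasFDerivAt _
  refine ⟨_, (hcoeff.smul hinner).congr_of_eventuallyEq hgrad, fun ξ η ↦ ?_⟩
  simp only [add_apply, smul_apply, ContinuousLinearMap.smulRight_apply, innerSL_apply_apply,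
    smul_eq_mul]
  rw [innerSL_apply_apply]
  ring_nf

end NormRpow

theorem Complex.norm_sq_mul_exp_neg_two_arg_mul_I (z : ℂ) :
    (‖z‖ : ℂ) ^ 2 * exp (-2 * (z.arg : ℂ) * I) = conj z ^ 2 := by
  have h := congrArg conj (norm_mul_exp_arg_mul_I z)
  rw [map_mul, ← exp_conj, map_mul, conj_ofReal, conj_ofReal, conj_I, mul_neg] at h
  rw [← h, mul_pow, ← exp_nat_mul]
  ring_nf

theorem Complex.two_mul_re_mul_re (a b : ℂ) : 2 * a.re * b.re = (a * conj b).re + (a * b).re := by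
  simp only [mul_re, conj_re, conj_im]
  ring

theorem Complex.two_mul_inner_mul_inner (ζ ξ η : ℂ) :
    2 * inner ℝ ζ ξ * inner ℝ ζ η =
      ‖ζ‖ ^ 2 * ((ξ * conj η).re + (exp (-2 * (ζ.arg : ℂ) * I) * ξ * η).re) := by
  rw [Complex.inner, Complex.inner, two_mul_re_mul_re, mul_add, ← re_ofReal_mul, ← re_ofReal_mul,
    ofReal_pow]
  congr 2
  · rw [← mul_conj', map_mul, conj_conj]
    ring
  · linear_combination -(ξ * η * norm_sq_mul_exp_neg_two_arg_mul_I ζ)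

theorem statement3_general (r : ℝ) (ζ : ℂ) (hζ : ζ ≠ 0) :
    Paper.TwiceDiffAt (Paper.Fpow r) ζ ∧
    ∀ ξ η : ℂ, Paper.D2 (Paper.Fpow r) ζ ξ η =
      (r ^ 2 / 2) * ‖ζ‖ ^ (r - 2) *
        ((ξ * conj η).re
          + (1 - 2 / r) * (Complex.exp (-2 * (ζ.arg : ℂ) * Complex.I) * ξ * η).re) := by
  unfold Paper.TwiceDiffAt Paper.D2 Paper.Fpow
  obtain ⟨B, hB, hB_apply⟩ := exists_hasFDerivAt_fderiv_norm_rpow (E := ℂ) r hζ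
  refine ⟨⟨(hasFDerivAt_norm_rpow_of_ne_zero r hζ).differentiableAt, hB.differentiableAt⟩,
    fun ξ η ↦ ?_⟩
  have hpow : ‖ζ‖ ^ (r - 4) * ‖ζ‖ ^ 2 = ‖ζ‖ ^ (r - 2) := by
    rw [← Real.rpow_natCast, ← Real.rpow_add (norm_pos_iff.mpr hζ)]
    ring_nf
  -- both sides vanish at `r = 0`, where `2 / r = 0`
  have hcoeff : r ^ 2 / 2 * (1 - 2 / r) = r * (r - 2) / 2 := by
    rcases eq_or_ne r 0 with rfl | hr
    · simp
    · field_simp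
  set X := (ξ * conj η).re
  set Y := (Complex.exp (-2 * (ζ.arg : ℂ) * Complex.I) * ξ * η).re
  rw [hB.fderiv, hB_apply, real_inner_comm, Complex.inner η ξ]
  linear_combination (r * (r - 2) / 2) * (‖ζ‖ ^ (r - 4) * Complex.two_mul_inner_mul_inner ζ ξ η
    + (X + Y) * hpow) - ‖ζ‖ ^ (r - 2) * Y * hcoeff

/-- the second derivative of the power function `F_r`:
`D²F_r(ζ)[ξ,η] = (r²/2)|ζ|^{r−2}(Re(ξ·conj η) + (1−2/r)·Re(e^{−2i·arg ζ}·ξ·η))`. -/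
theorem statement3 (r : ℝ) (hr : 0 < r) (ζ : ℂ) (hζ : ζ ≠ 0) :
    Paper.TwiceDiffAt (Paper.Fpow r) ζ ∧
    ∀ ξ η : ℂ, Paper.D2 (Paper.Fpow r) ζ ξ η =
      (r ^ 2 / 2) * ‖ζ‖ ^ (r - 2) *
        ((ξ * conj η).re
          + (1 - 2 / r) * (Complex.exp (-2 * (ζ.arg : ℂ) * Complex.I) * ξ * η).re) :=
  statement3_general r ζ hζ
end
end

section
/- Let p ∈ (1,∞) and let A = U + iV be an n×n complex matrix (U = Re A, V = Im A entrywise) such that the symmetric part U_s is positive definite. Then the following are equivalent: (1) Δ_p(A) ≥ 0; (2) ⟨Uα,α⟩ + ⟨Uβ,β⟩ + 2⟨𝒱_p(V)α,β⟩ ≥ 0 for all α, β ∈ ℝⁿ; (3) ‖𝒲_p(A)‖ ≤ 1. -/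
open scoped BigOperators ComplexConjugate Matrix

noncomputable section

/-!
Write `ξ = α + iβ`. A direct computation gives
`p · Re⟨Aξ, 𝒥_p ξ⟩ = ⟨Uα,α⟩ + ⟨Uβ',β'⟩ + 2⟨𝒱_p(V)α,β'⟩` with `β' = √(p-1) β`, so (by
2-homogeneity, and compactness of the unit sphere for the infimum) `Δ_p(A) ≥ 0` is exactly the
nonnegativity of this real quadratic form. Since `S² = U_s` and `⟨Uα,α⟩ = ⟨U_sα,α⟩`, the
substitution `a = Sα`, `b = Sβ` turns the form into `|a|² + |b|² + 2⟨𝒲_p(A)a, b⟩`, which is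
nonnegative for all `a, b` iff `‖𝒲_p(A)‖ ≤ 1`: take `b = -𝒲_p(A)a` in one direction, and use
Cauchy–Schwarz and `2|a||b| ≤ |a|² + |b|²` in the other.
-/

lemma ContinuousLinearMap.forall_norm_sq_add_norm_sq_add_inner_nonneg_iff {E : Type*}
    [NormedAddCommGroup E] [InnerProductSpace ℝ E] (T : E →L[ℝ] E) :
    (∀ a b : E, 0 ≤ ‖a‖ ^ 2 + ‖b‖ ^ 2 + 2 * inner ℝ (T a) b) ↔ ‖T‖ ≤ 1 := by
  constructor
  · intro h
    refine T.opNorm_le_bound zero_le_one fun a => ?_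
    have h' := h a (-T a)
    rw [inner_neg_right, real_inner_self_eq_norm_sq, norm_neg] at h'
    nlinarith [norm_nonneg a, norm_nonneg (T a)]
  · intro h a b
    have hTa : ‖T a‖ ≤ ‖a‖ := by simpa using T.le_of_opNorm_le h a
    have hCS := abs_le.1 (abs_real_inner_le_norm (T a) b)
    nlinarith [norm_nonneg b, sq_nonneg (‖a‖ - ‖b‖)]

namespace Paper

variable {n : ℕ}

lemma rdot_eq_dotProduct (u v : Fin n → ℝ) : rdot u v = u ⬝ᵥ v := rfl

lemma rdot_mulVec_left (M : Matrix (Fin n) (Fin n) ℝ) (u v : Fin n → ℝ) :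
    rdot (M *ᵥ u) v = rdot u (Mᵀ *ᵥ v) := by
  rw [rdot_eq_dotProduct, rdot_eq_dotProduct, dotProduct_comm, Matrix.dotProduct_mulVec,
    ← Matrix.mulVec_transpose, dotProduct_comm]

lemma rdot_mulVec_right (M : Matrix (Fin n) (Fin n) ℝ) (u v : Fin n → ℝ) :
    rdot u (M *ᵥ v) = rdot (Mᵀ *ᵥ u) v := by
  rw [rdot_mulVec_left, Matrix.transpose_transpose]

lemma rdot_symPart_mulVec_self (M : Matrix (Fin n) (Fin n) ℝ) (u : Fin n → ℝ) :
    rdot (symPart M *ᵥ u) u = rdot (M *ᵥ u) u := by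
  have h : rdot (Mᵀ *ᵥ u) u = rdot (M *ᵥ u) u := by
    rw [← rdot_mulVec_right, rdot_eq_dotProduct, dotProduct_comm]
    rfl
  simp only [rdot_eq_dotProduct, symPart, Matrix.smul_mulVec, Matrix.add_mulVec, smul_dotProduct,
    add_dotProduct] at h ⊢
  rw [h, smul_eq_mul]
  ring

lemma rdot_eq_inner_toLp (u v : Fin n → ℝ) :
    rdot u v = inner ℝ (WithLp.toLp 2 u) (WithLp.toLp 2 v) := by
  simp [rdot, PiLp.inner_apply, mul_comm]

lemma rdot_self_eq_norm_toLp_sq (u : Fin n → ℝ) : rdot u u = ‖WithLp.toLp 2 u‖ ^ 2 := by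
  rw [rdot_eq_inner_toLp, real_inner_self_eq_norm_sq]

lemma opnormR_eq_norm_toEuclideanCLM (M : Matrix (Fin n) (Fin n) ℝ) :
    opnormR M = ‖Matrix.toEuclideanCLM (n := Fin n) (𝕜 := ℝ) M‖ := by
  have henorm (u : Fin n → ℝ) : enorm u = ‖WithLp.toLp 2 u‖ := by
    simp [enorm, EuclideanSpace.norm_eq]
  rw [← ContinuousLinearMap.sSup_sphere_eq_norm, opnormR]
  congr 1
  ext t
  constructor
  · rintro ⟨u, hu, rfl⟩
    exact ⟨WithLp.toLp 2 u, by simpa [henorm] using hu, by simp [henorm]⟩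
  · rintro ⟨x, hx, rfl⟩
    exact ⟨WithLp.ofLp x, by simpa [henorm] using hx, by rw [henorm]; rfl⟩

lemma rposDef_iff_posDef {M : Matrix (Fin n) (Fin n) ℝ} : RPosDef M ↔ M.PosDef := by
  simp only [Matrix.posDef_iff_dotProduct_mulVec, RPosDef, Matrix.IsHermitian,
    Matrix.conjTranspose_eq_transpose_of_trivial, star_trivial, rdot_eq_dotProduct,
    dotProduct_comm _ (M *ᵥ _)]

lemma RPosDef.isUnit {S : Matrix (Fin n) (Fin n) ℝ} (hS : RPosDef S) : IsUnit S :=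
  (rposDef_iff_posDef.1 hS).isUnit

open scoped MatrixOrder in
lemma RPosDef.exists_mul_self_eq {M : Matrix (Fin n) (Fin n) ℝ} (hM : RPosDef M) :
    ∃ S, RPosDef S ∧ S * S = M := by
  have hM' := rposDef_iff_posDef.1 hM
  exact ⟨CFC.sqrt M,
    rposDef_iff_posDef.2 (Matrix.IsStrictlyPositive.posDef hM'.isStrictlyPositive.sqrt),
    CFC.sqrt_mul_sqrt_self M hM'.posSemidef.nonneg⟩

lemma symPart_transpose {R : Type*} [Field R] (M : Matrix (Fin n) (Fin n) R) :
    (symPart M)ᵀ = symPart M := by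
  rw [symPart, Matrix.transpose_smul, Matrix.transpose_add, Matrix.transpose_transpose, add_comm]

def quadForm (U M : Matrix (Fin n) (Fin n) ℝ) (α β : Fin n → ℝ) : ℝ :=
  rdot (U *ᵥ α) α + rdot (U *ᵥ β) β + 2 * rdot (M *ᵥ α) β

lemma quadForm_eq_of_mul_self_eq_symPart {U S : Matrix (Fin n) (Fin n) ℝ} (hSt : Sᵀ = S)
    (hS : IsUnit S) (hSS : S * S = symPart U) (M : Matrix (Fin n) (Fin n) ℝ) (α β : Fin n → ℝ) :
    quadForm U M α β = ‖WithLp.toLp 2 (S *ᵥ α)‖ ^ 2 + ‖WithLp.toLp 2 (S *ᵥ β)‖ ^ 2 +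
      2 * inner ℝ (Matrix.toEuclideanCLM (n := Fin n) (𝕜 := ℝ) (S⁻¹ * M * S⁻¹)
        (WithLp.toLp 2 (S *ᵥ α))) (WithLp.toLp 2 (S *ᵥ β)) := by
  have hdet := (Matrix.isUnit_iff_isUnit_det S).1 hS
  have hU (u : Fin n → ℝ) : rdot (U *ᵥ u) u = ‖WithLp.toLp 2 (S *ᵥ u)‖ ^ 2 := by
    rw [← rdot_symPart_mulVec_self, ← hSS, ← Matrix.mulVec_mulVec, rdot_mulVec_left, hSt,
      rdot_self_eq_norm_toLp_sq]
  have hSWS : S * (S⁻¹ * M * S⁻¹) * S = M := by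
    rw [Matrix.mul_assoc S⁻¹ M, Matrix.mul_nonsing_inv_cancel_left _ _ hdet,
      Matrix.nonsing_inv_mul_cancel_right _ _ hdet]
  have hM : rdot (M *ᵥ α) β = rdot ((S⁻¹ * M * S⁻¹) *ᵥ (S *ᵥ α)) (S *ᵥ β) := by
    rw [rdot_mulVec_right, hSt, Matrix.mulVec_mulVec, Matrix.mulVec_mulVec, hSWS]
  rw [quadForm, hU, hU, hM, Matrix.toEuclideanCLM_toLp, ← rdot_eq_inner_toLp]

lemma forall_quadForm_nonneg_iff {U S : Matrix (Fin n) (Fin n) ℝ} (hS : RPosDef S)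
    (hSS : S * S = symPart U) (M : Matrix (Fin n) (Fin n) ℝ) :
    (∀ α β, 0 ≤ quadForm U M α β) ↔ opnormR (S⁻¹ * M * S⁻¹) ≤ 1 := by
  have hsurj : Function.Surjective fun α => WithLp.toLp 2 (S *ᵥ α) :=
    (WithLp.toLp_surjective 2).comp (Matrix.mulVec_surjective_iff_isUnit.2 hS.isUnit)
  rw [opnormR_eq_norm_toEuclideanCLM,
    ← ContinuousLinearMap.forall_norm_sq_add_norm_sq_add_inner_nonneg_iff, hsurj.forall₂]
  simp only [quadForm_eq_of_mul_self_eq_symPart hS.1 hS.isUnit hSS]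

def reVec (ξ : Fin n → ℂ) : Fin n → ℝ := fun j => (ξ j).re

def imVec (ξ : Fin n → ℂ) : Fin n → ℝ := fun j => (ξ j).im

lemma cnorm_eq_norm_toLp (ξ : Fin n → ℂ) : cnorm ξ = ‖WithLp.toLp 2 ξ‖ := by
  simp [cnorm, herm, EuclideanSpace.norm_eq, Complex.mul_conj', ← Complex.ofReal_pow]

lemma herm_mulVec_Jmap_ofReal_smul (p c : ℝ) (A : Matrix (Fin n) (Fin n) ℂ) (ξ : Fin n → ℂ) :
    herm (A *ᵥ ((c : ℂ) • ξ)) (Jmap p ((c : ℂ) • ξ)) = c ^ 2 * herm (A *ᵥ ξ) (Jmap p ξ) := by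
  have hJ : Jmap p ((c : ℂ) • ξ) = (c : ℂ) • Jmap p ξ := by
    funext j
    apply Complex.ext <;> simp [Jmap] <;> ring
  simp only [hJ, herm, Matrix.mulVec_smul, Finset.mul_sum, Pi.smul_apply, smul_eq_mul, map_mul,
    Complex.conj_ofReal]
  exact Finset.sum_congr rfl fun j _ => by ring

lemma bddBelow_deltap_set (p : ℝ) (A : Matrix (Fin n) (Fin n) ℂ) :
    BddBelow {t : ℝ | ∃ ξ : Fin n → ℂ, cnorm ξ = 1 ∧ t = 2 * (herm (A *ᵥ ξ) (Jmap p ξ)).re} := by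
  have hset : {t : ℝ | ∃ ξ : Fin n → ℂ, cnorm ξ = 1 ∧ t = 2 * (herm (A *ᵥ ξ) (Jmap p ξ)).re} =
      (fun x : EuclideanSpace ℂ (Fin n) => 2 * (herm (A *ᵥ x.ofLp) (Jmap p x.ofLp)).re) ''
        Metric.sphere 0 1 := by
    ext t
    simp only [Set.mem_ofPred_eq, Set.mem_image, mem_sphere_iff_norm, sub_zero, cnorm_eq_norm_toLp]
    exact ⟨fun ⟨ξ, hξ, ht⟩ => ⟨WithLp.toLp 2 ξ, hξ, ht.symm⟩,
      fun ⟨x, hx, ht⟩ => ⟨x.ofLp, hx, ht.symm⟩⟩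
  rw [hset]
  refine (isCompact_sphere 0 1).bddBelow_image (Continuous.continuousOn ?_)
  unfold herm Jmap
  fun_prop

lemma deltap_nonneg_iff (p : ℝ) (A : Matrix (Fin n) (Fin n) ℂ) :
    0 ≤ Deltap p A ↔ ∀ ξ, 0 ≤ (herm (A *ᵥ ξ) (Jmap p ξ)).re := by
  refine ⟨fun h ξ => ?_, fun h => Real.sInf_nonneg ?_⟩
  · rcases eq_or_ne ξ 0 with rfl | hξ
    · simp [herm]
    have hr : 0 < cnorm ξ := by
      rw [cnorm_eq_norm_toLp, norm_pos_iff]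
      simpa using hξ
    have hunit : cnorm ((((cnorm ξ)⁻¹ : ℝ) : ℂ) • ξ) = 1 := by
      rw [cnorm_eq_norm_toLp, WithLp.toLp_smul, norm_smul, ← cnorm_eq_norm_toLp, Complex.norm_real,
        Real.norm_of_nonneg (inv_nonneg.2 hr.le), inv_mul_cancel₀ hr.ne']
    have hle := h.trans (csInf_le (bddBelow_deltap_set p A) ⟨_, hunit, rfl⟩)
    rw [herm_mulVec_Jmap_ofReal_smul, ← Complex.ofReal_pow, Complex.re_ofReal_mul,
      ← mul_assoc] at hle
    exact (mul_nonneg_iff_of_pos_left (by positivity)).1 hle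
  · rintro t ⟨ξ, -, rfl⟩
    linarith [h ξ]

lemma re_cplx_mulVec (U V : Matrix (Fin n) (Fin n) ℝ) (ξ : Fin n → ℂ) (j : Fin n) :
    ((cplx U V *ᵥ ξ) j).re = (U *ᵥ reVec ξ) j - (V *ᵥ imVec ξ) j := by
  simp [cplx, reVec, imVec, Matrix.mulVec, dotProduct, Complex.re_sum, ← Finset.sum_sub_distrib,
    Complex.mul_re]

lemma im_cplx_mulVec (U V : Matrix (Fin n) (Fin n) ℝ) (ξ : Fin n → ℂ) (j : Fin n) :
    ((cplx U V *ᵥ ξ) j).im = (U *ᵥ imVec ξ) j + (V *ᵥ reVec ξ) j := by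
  simp [cplx, reVec, imVec, Matrix.mulVec, dotProduct, Complex.im_sum, ← Finset.sum_add_distrib,
    Complex.mul_im]

lemma mul_re_herm_cplx_mulVec_Jmap {p : ℝ} (hp : p ≠ 0) (U V : Matrix (Fin n) (Fin n) ℝ)
    (ξ : Fin n → ℂ) :
    p * (herm (cplx U V *ᵥ ξ) (Jmap p ξ)).re =
      rdot (U *ᵥ reVec ξ) (reVec ξ) - rdot (V *ᵥ imVec ξ) (reVec ξ) +
        (p - 1) * (rdot (U *ᵥ imVec ξ) (imVec ξ) + rdot (V *ᵥ reVec ξ) (imVec ξ)) := by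
  simp only [herm, Complex.re_sum, rdot, Finset.mul_sum, ← Finset.sum_add_distrib,
    ← Finset.sum_sub_distrib, Complex.mul_re, Complex.conj_re, Complex.conj_im, re_cplx_mulVec,
    im_cplx_mulVec]
  refine Finset.sum_congr rfl fun j _ => ?_
  simp only [reVec, imVec, Jmap, Complex.add_re, Complex.add_im, Complex.ofReal_re,
    Complex.ofReal_im, Complex.mul_re, Complex.mul_im, Complex.I_re, Complex.I_im]
  field_simp
  ring

lemma two_sqrt_mul_rdot_Vmap {p : ℝ} (hp : 1 < p) (V : Matrix (Fin n) (Fin n) ℝ)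
    (α β : Fin n → ℝ) :
    2 * √(p - 1) * rdot (Vmap p V *ᵥ α) β = (p - 1) * rdot (V *ᵥ α) β - rdot (V *ᵥ β) α := by
  have hs : √(p - 1) ≠ 0 := (Real.sqrt_pos.2 (by linarith)).ne'
  rw [rdot_mulVec_left V β, rdot_eq_dotProduct β, dotProduct_comm β]
  simp only [Vmap, symPart, antiPart, rdot_eq_dotProduct, Matrix.add_mulVec, Matrix.sub_mulVec,
    Matrix.smul_mulVec, add_dotProduct, sub_dotProduct, smul_dotProduct, smul_eq_mul]
  field_simp
  ring

lemma mul_re_herm_cplx_mulVec_Jmap_eq_quadForm {p : ℝ} (hp : 1 < p)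
    (U V : Matrix (Fin n) (Fin n) ℝ) (ξ : Fin n → ℂ) :
    p * (herm (cplx U V *ᵥ ξ) (Jmap p ξ)).re =
      quadForm U (Vmap p V) (reVec ξ) (√(p - 1) • imVec ξ) := by
  have hs : √(p - 1) * √(p - 1) = p - 1 := Real.mul_self_sqrt (by linarith)
  have hV := two_sqrt_mul_rdot_Vmap hp V (reVec ξ) (imVec ξ)
  rw [mul_re_herm_cplx_mulVec_Jmap (by positivity) U V ξ]
  simp only [quadForm, rdot_eq_dotProduct, Matrix.mulVec_smul, smul_dotProduct, dotProduct_smul,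
    smul_eq_mul] at hV ⊢
  linear_combination -hV - (U *ᵥ imVec ξ ⬝ᵥ imVec ξ) * hs

lemma deltap_cplx_nonneg_iff {p : ℝ} (hp : 1 < p) (U V : Matrix (Fin n) (Fin n) ℝ) :
    0 ≤ Deltap p (cplx U V) ↔ ∀ α β, 0 ≤ quadForm U (Vmap p V) α β := by
  have hp0 : 0 < p := by linarith
  have hs : √(p - 1) ≠ 0 := (Real.sqrt_pos.2 (by linarith)).ne'
  rw [deltap_nonneg_iff]
  constructor
  · intro h α β
    let ξ : Fin n → ℂ := fun j => (α j : ℂ) + ((β j / √(p - 1) : ℝ) : ℂ) * Complex.I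
    have hre : reVec ξ = α := by funext j; simp [ξ, reVec]
    have him : √(p - 1) • imVec ξ = β := by funext j; simp [ξ, imVec]; field_simp
    rw [← hre, ← him, ← mul_re_herm_cplx_mulVec_Jmap_eq_quadForm hp]
    exact mul_nonneg hp0.le (h ξ)
  · intro h ξ
    have hQ := h (reVec ξ) (√(p - 1) • imVec ξ)
    rw [← mul_re_herm_cplx_mulVec_Jmap_eq_quadForm hp] at hQ
    exact (mul_nonneg_iff_of_pos_left hp0).1 hQ

end Paper

/-- for `A = U + iV` with `U_s` positive definite, the following are
equivalent: (1) `Δ_p(A) ≥ 0`; (2) `⟨Uα,α⟩ + ⟨Uβ,β⟩ + 2⟨𝒱_p(V)α,β⟩ ≥ 0` for all `α,β`;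
(3) `‖𝒲_p(A)‖ ≤ 1` (where `𝒲_p(A) = S⁻¹𝒱_p(V)S⁻¹`, `S` the positive-definite square
root of `U_s`). -/
theorem statement5 (n : ℕ) (p : ℝ) (hp : 1 < p)
    (U V : Matrix (Fin n) (Fin n) ℝ)
    (hUs : ∀ α : Fin n → ℝ, α ≠ 0 → 0 < Paper.rdot ((Paper.symPart U).mulVec α) α) :
    List.TFAE [
      0 ≤ Paper.Deltap p (Paper.cplx U V),
      ∀ α β : Fin n → ℝ,
        0 ≤ Paper.rdot (U.mulVec α) α + Paper.rdot (U.mulVec β) β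
            + 2 * Paper.rdot ((Paper.Vmap p V).mulVec α) β,
      ∀ S : Matrix (Fin n) (Fin n) ℝ, Paper.RPosDef S → S * S = Paper.symPart U →
        Paper.opnormR (S⁻¹ * Paper.Vmap p V * S⁻¹) ≤ 1 ] := by
  obtain ⟨S, hS, hSS⟩ := Paper.RPosDef.exists_mul_self_eq ⟨Paper.symPart_transpose U, hUs⟩
  tfae_have 1 ↔ 2 := Paper.deltap_cplx_nonneg_iff hp U V
  tfae_have 2 → 3 := fun h S' hS' hSS' => (Paper.forall_quadForm_nonneg_iff hS' hSS' _).1 h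
  tfae_have 3 → 2 := fun h => (Paper.forall_quadForm_nonneg_iff hS hSS _).2 (h S hS hSS)
  tfae_finish
end
end

section
/- Let n ≥ 1, φ ∈ ℝ and p ∈ (1,∞), and let Iₙ be the n×n identity matrix. Then Δ_p(e^{iφ}·Iₙ) = cos φ − |1 − 2/p|. -/
open scoped BigOperators ComplexConjugate Matrix

noncomputable section

/-! Since `2 𝒥_p ξ = ξ − (1 − 2/p) ξ̄`, for `A = e^{iφ} Iₙ` and `|ξ| = 1` one has
`2 Re⟨Aξ, 𝒥_p ξ⟩ = cos φ − (1 − 2/p) Re (e^{iφ} ∑ ⱼ ξⱼ²)`. Now `|∑ ⱼ ξⱼ²| ≤ |ξ|² = 1`, and every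
unimodular value of `∑ ⱼ ξⱼ²` is attained by a multiple of a basis vector, so the minimum is
`cos φ − |1 − 2/p|`. -/

lemma exists_norm_eq_one_mul_re_eq_abs (t : ℝ) : ∃ w : ℂ, ‖w‖ = 1 ∧ t * w.re = |t| := by
  rcases le_or_gt 0 t with ht | ht
  · exact ⟨1, by simp, by simp [abs_of_nonneg ht]⟩
  · exact ⟨-1, by simp, by simp [abs_of_neg ht]⟩

lemma mul_re_le_abs (t : ℝ) {w : ℂ} (hw : ‖w‖ ≤ 1) : t * w.re ≤ |t| :=
  calc t * w.re ≤ |t| * |w.re| := (le_abs_self _).trans (abs_mul _ _).le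
    _ ≤ |t| * 1 := by gcongr; exact (Complex.abs_re_le_norm w).trans hw
    _ = |t| := mul_one _

namespace Paper

variable {n : ℕ}

lemma herm_smul_left (c : ℂ) (z w : Fin n → ℂ) : herm (c • z) w = c * herm z w := by
  simp only [herm, Pi.smul_apply, smul_eq_mul, Finset.mul_sum, mul_assoc]

lemma herm_self (ξ : Fin n → ℂ) : herm ξ ξ = ((∑ j, ‖ξ j‖ ^ 2 : ℝ) : ℂ) := by
  simp only [herm, Complex.mul_conj, Complex.normSq_eq_norm_sq, Complex.ofReal_sum]

lemma cnorm_eq_sqrt (ξ : Fin n → ℂ) : cnorm ξ = Real.sqrt (∑ j, ‖ξ j‖ ^ 2) := by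
  rw [cnorm, herm_self, Complex.ofReal_re]

lemma herm_self_eq_one_of_cnorm_eq_one {ξ : Fin n → ℂ} (hξ : cnorm ξ = 1) : herm ξ ξ = 1 := by
  rw [cnorm_eq_sqrt, Real.sqrt_eq_one] at hξ
  rw [herm_self, hξ, Complex.ofReal_one]

lemma herm_vconj_self (ξ : Fin n → ℂ) : herm ξ (vconj ξ) = ∑ j, ξ j ^ 2 := by
  simp only [herm, vconj, Complex.conj_conj, sq]

lemma norm_sum_sq_le_of_cnorm_eq_one {ξ : Fin n → ℂ} (hξ : cnorm ξ = 1) :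
    ‖∑ j, ξ j ^ 2‖ ≤ 1 := by
  rw [cnorm_eq_sqrt, Real.sqrt_eq_one] at hξ
  calc ‖∑ j, ξ j ^ 2‖ ≤ ∑ j, ‖ξ j ^ 2‖ := norm_sum_le _ _
    _ = 1 := by simp only [norm_pow, hξ]

lemma two_mul_herm_Jmap (p : ℝ) (z ξ : Fin n → ℂ) :
    2 * herm z (Jmap p ξ) = herm z ξ - (1 - 2 / p) * herm z (vconj ξ) := by
  simp only [herm, Jmap, vconj, Finset.mul_sum, ← Finset.sum_sub_distrib]
  refine Finset.sum_congr rfl fun j _ => ?_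
  conv_rhs => rw [← Complex.re_add_im (ξ j)]
  push_cast
  simp only [map_add, map_sub, map_mul, map_div₀, map_neg, map_one,
    Complex.conj_ofReal, Complex.conj_I]
  ring

lemma exists_cnorm_eq_one_sum_sq_eq (hn : 1 ≤ n) {w : ℂ} (hw : ‖w‖ = 1) :
    ∃ ξ : Fin n → ℂ, cnorm ξ = 1 ∧ ∑ j, ξ j ^ 2 = w := by
  obtain ⟨z, hz⟩ := IsAlgClosed.exists_pow_nat_eq w two_pos
  have hz1 : ‖z‖ = 1 := by
    rwa [← hz, norm_pow, pow_eq_one_iff_of_nonneg (norm_nonneg z) two_ne_zero] at hw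
  let i₀ : Fin n := ⟨0, hn⟩
  refine ⟨Pi.single i₀ z, ?_, ?_⟩
  · rw [cnorm_eq_sqrt, Finset.sum_eq_single i₀ (fun j _ hj => by simp [hj]) (by simp)]
    simp [hz1]
  · rw [Finset.sum_eq_single i₀ (fun j _ hj => by simp [hj]) (by simp)]
    simpa using hz

lemma two_mul_re_herm_Jmap_exp_smul_one (φ p : ℝ) {ξ : Fin n → ℂ} (hξ : cnorm ξ = 1) :
    2 * (herm ((Complex.exp (φ * Complex.I) • (1 : Matrix (Fin n) (Fin n) ℂ)).mulVec ξ)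
      (Jmap p ξ)).re
      = Real.cos φ - (1 - 2 / p) * (Complex.exp (φ * Complex.I) * ∑ j, ξ j ^ 2).re := by
  rw [Matrix.smul_mulVec, Matrix.one_mulVec]
  have h := congrArg Complex.re (two_mul_herm_Jmap p (Complex.exp (φ * Complex.I) • ξ) ξ)
  rw [herm_smul_left _ ξ ξ, herm_smul_left _ ξ (vconj ξ), herm_self_eq_one_of_cnorm_eq_one hξ,
    herm_vconj_self, mul_one] at h
  simpa [Complex.exp_ofReal_mul_I_re] using h

end Paper

theorem statement11_general (n : ℕ) (hn : 1 ≤ n) (φ p : ℝ) :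
    Paper.Deltap p (Complex.exp (φ * Complex.I) • (1 : Matrix (Fin n) (Fin n) ℂ))
      = Real.cos φ - |1 - 2 / p| := by
  refine IsLeast.csInf_eq ⟨?_, ?_⟩
  · obtain ⟨w, hw, htw⟩ := exists_norm_eq_one_mul_re_eq_abs (1 - 2 / p)
    obtain ⟨ξ, hξ, hsum⟩ := Paper.exists_cnorm_eq_one_sum_sq_eq hn
      (w := Complex.exp ((-φ : ℝ) * Complex.I) * w)
      (by rw [norm_mul, Complex.norm_exp_ofReal_mul_I, hw, one_mul])
    have hcancel : Complex.exp (φ * Complex.I) * Complex.exp ((-φ : ℝ) * Complex.I) = 1 := by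
      rw [← Complex.exp_add, ← add_mul, ← Complex.ofReal_add, add_neg_cancel, Complex.ofReal_zero,
        zero_mul, Complex.exp_zero]
    refine ⟨ξ, hξ, ?_⟩
    rw [Paper.two_mul_re_herm_Jmap_exp_smul_one φ p hξ, hsum, ← mul_assoc, hcancel, one_mul, htw]
  · rintro _ ⟨ξ, hξ, rfl⟩
    rw [Paper.two_mul_re_herm_Jmap_exp_smul_one φ p hξ]
    have hnorm : ‖Complex.exp (φ * Complex.I) * ∑ j, ξ j ^ 2‖ ≤ 1 := by
      rw [norm_mul, Complex.norm_exp_ofReal_mul_I, one_mul]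
      exact Paper.norm_sum_sq_le_of_cnorm_eq_one hξ
    linarith [mul_re_le_abs (1 - 2 / p) hnorm]

/-- `Δ_p(e^{iφ}·Iₙ) = cos φ − |1 − 2/p|`. -/
theorem statement11 (n : ℕ) (hn : 1 ≤ n) (φ p : ℝ) (hp : 1 < p) :
    Paper.Deltap p (Complex.exp (φ * Complex.I) • (1 : Matrix (Fin n) (Fin n) ℂ))
      = Real.cos φ - |1 - 2 / p| :=
  statement11_general n hn φ p
end
end
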